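/- Let A be a complete local Noetherian O-algebra with residue field k and ρ : G → GL_n(A) a continuous representation whose residual representation ρ̄ is absolutely irreducible. If ρ has finite image, then the closed O-subalgebra of A generated by the traces tr ρ(g), g ∈ G, is a finite O-module. -/

import Mathlib

open Polynomial

/-- Over an algebraically closed field, the trace of a matrix of finite order
satisfies a monic integer polynomial. -/
lemma trace_int_poly_of_pow_eq_one_field {F : Type*} [Field F] [IsAlgClosed F]
    {n m : ℕ} (hm : m ≠ 0) (M : Matrix (Fin n) (Fin n) F) (h : M ^ m = 1) :
    ∃ p : ℤ[X], p.Monic ∧ Polynomial.eval₂ (Int.castRingHom F) M.trace p = 0 := by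
  have htr : M.trace = (Matrix.charpoly M).roots.sum :=
    Matrix.trace_eq_sum_roots_charpoly M
  -- every root of the charpoly is an m-th root of unity
  have hroot : ∀ lam ∈ (Matrix.charpoly M).roots, lam ^ m = 1 := by
    intro lam hlam
    have h0 : (Matrix.charpoly M).eval lam = 0 :=
      Polynomial.isRoot_of_mem_roots hlam
    have hdet : ((Matrix.charmatrix M).map (Polynomial.evalRingHom lam)).det = 0 := by
      rw [← RingHom.mapMatrix_apply, ← RingHom.map_det]
      simpa [Matrix.charpoly] using h0
    have hmat : (Matrix.charmatrix M).map (Polynomial.evalRingHom lam) = lam • 1 - M := by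
      ext i j
      rcases eq_or_ne i j with rfl | hij
      · simp [Matrix.map_apply, Matrix.smul_apply, Matrix.one_apply, Matrix.sub_apply]
      · simp [Matrix.map_apply, Matrix.smul_apply, Matrix.one_apply, Matrix.sub_apply, hij,
          Matrix.charmatrix_apply_ne _ _ _ hij]
    rw [hmat] at hdet
    obtain ⟨v, hv, hv0⟩ := (Matrix.exists_mulVec_eq_zero_iff).2 hdet
    have heig : M.mulVec v = lam • v := by
      rw [Matrix.sub_mulVec, Matrix.smul_mulVec, Matrix.one_mulVec, sub_eq_zero] at hv0
      exact hv0.symm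
    have hpow : ∀ j : ℕ, (M ^ j).mulVec v = lam ^ j • v := by
      intro j
      induction j with
      | zero => simp [Matrix.one_mulVec]
      | succ j ih =>
          rw [pow_succ', ← Matrix.mulVec_mulVec, ih, Matrix.mulVec_smul, heig, smul_smul,
            pow_succ]
    have hv1 : v = lam ^ m • v := by
      have := hpow m
      rwa [h, Matrix.one_mulVec] at this
    obtain ⟨i, hi⟩ := Function.ne_iff.1 hv
    have : v i = lam ^ m * v i := congrFun hv1 i
    have h2 : (lam ^ m - 1) * v i = 0 := by ring_nf; linear_combination -this
    rcases mul_eq_zero.1 h2 with h3 | h3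
    · linear_combination h3
    · exact absurd h3 hi
  -- hence the trace is integral over ℤ
  have hint : IsIntegral ℤ M.trace := by
    have : M.trace ∈ integralClosure ℤ F := by
      rw [htr]
      refine Subalgebra.multiset_sum_mem _ ?_
      intro lam hlam
      have : IsIntegral ℤ lam := by
        refine ⟨X ^ m - 1, ?_, ?_⟩
        · simpa using monic_X_pow_sub_C (1 : ℤ) hm
        · simp [hroot lam hlam]
      exact this
    exact this
  obtain ⟨p, hp, hp0⟩ := hint
  exact ⟨p, hp, by rwa [algebraMap_int_eq] at hp0⟩

/-- Over a Noetherian commutative ring, the trace of a matrix of finite order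
satisfies a monic integer polynomial. -/
lemma trace_int_poly_of_pow_eq_one {A : Type*} [CommRing A] [IsNoetherianRing A]
    {n m : ℕ} (hm : m ≠ 0) (M : Matrix (Fin n) (Fin n) A) (h : M ^ m = 1) :
    ∃ p : ℤ[X], p.Monic ∧ Polynomial.eval₂ (Int.castRingHom A) M.trace p = 0 := by
  classical
  set x := M.trace with hx
  -- for each minimal prime, a monic polynomial killing x mod that prime
  have hP : ∀ P : Ideal A, ∃ p : ℤ[X], p.Monic ∧
      (P ∈ minimalPrimes A → Polynomial.eval₂ (Int.castRingHom A) x p ∈ P) := by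
    intro P
    by_cases hPm : P ∈ minimalPrimes A
    · haveI : P.IsPrime := hPm.1.1
      set D := A ⧸ P
      set K := FractionRing D
      set L := AlgebraicClosure K
      set φ : A →+* L :=
        ((algebraMap K L).comp (algebraMap D K)).comp (Ideal.Quotient.mk P) with hφ
      have hφinj : ∀ a : A, φ a = 0 → a ∈ P := by
        intro a ha
        have h1 : (algebraMap K L) ((algebraMap D K) (Ideal.Quotient.mk P a)) = 0 := ha
        have h2 : (algebraMap D K) (Ideal.Quotient.mk P a) = 0 := by
          have := (algebraMap K L).injective
          apply this
          simpa using h1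
        have h3 : Ideal.Quotient.mk P a = 0 :=
          IsFractionRing.injective D K (by simpa using h2)
        exact (Ideal.Quotient.eq_zero_iff_mem).1 h3
      set M' : Matrix (Fin n) (Fin n) L := M.map φ with hM'
      have hM'pow : M' ^ m = 1 := by
        have : φ.mapMatrix (M ^ m) = φ.mapMatrix 1 := by rw [h]
        rw [map_pow, map_one] at this
        simpa [hM', RingHom.mapMatrix_apply] using this
      obtain ⟨p, hp, hp0⟩ := trace_int_poly_of_pow_eq_one_field hm M' hM'pow
      refine ⟨p, hp, fun _ => ?_⟩
      apply hφinj
      have htr : M'.trace = φ x := by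
        simp only [hM', Matrix.trace, Matrix.diag, Matrix.map_apply, hx]
        exact (map_sum φ (fun i => M i i) Finset.univ).symm
      have hcomp : φ.comp (Int.castRingHom A) = Int.castRingHom L :=
        RingHom.eq_intCast' _
      calc φ (Polynomial.eval₂ (Int.castRingHom A) x p)
          = Polynomial.eval₂ (φ.comp (Int.castRingHom A)) (φ x) p :=
            Polynomial.hom_eval₂ _ _ _ _
        _ = Polynomial.eval₂ (Int.castRingHom L) M'.trace p := by rw [hcomp, htr]
        _ = 0 := hp0
    · exact ⟨1, monic_one, fun hc => absurd hc hPm⟩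
  choose p hpmonic hpmem using hP
  have hSfin : (minimalPrimes A).Finite := minimalPrimes.finite_of_isNoetherianRing A
  set S : Finset (Ideal A) := hSfin.toFinset with hS
  set F : ℤ[X] := ∏ P ∈ S, p P with hF
  have hFmonic : F.Monic := monic_prod_of_monic _ _ (fun P _ => hpmonic P)
  have hFnil : IsNilpotent (Polynomial.eval₂ (Int.castRingHom A) x F) := by
    rw [← mem_nilradical, nilradical_eq_sInf, Submodule.mem_sInf]
    intro J hJ
    haveI : Ideal.IsPrime J := hJ
    obtain ⟨P, hPmin, hPJ⟩ := Ideal.exists_minimalPrimes_le (bot_le (a := J))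
    have hPS : P ∈ S := hSfin.mem_toFinset.2 hPmin
    have hdvd : p P ∣ F := Finset.dvd_prod_of_mem _ hPS
    obtain ⟨c, hc⟩ := hdvd
    have : Polynomial.eval₂ (Int.castRingHom A) x F
        = Polynomial.eval₂ (Int.castRingHom A) x (p P)
          * Polynomial.eval₂ (Int.castRingHom A) x c := by
      rw [hc]
      exact Polynomial.eval₂_mul _ _
    rw [this]
    exact hPJ (Ideal.mul_mem_right _ _ (hpmem P hPmin))
  obtain ⟨N, hN⟩ := hFnil
  refine ⟨F ^ N, hFmonic.pow N, ?_⟩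
  rw [Polynomial.eval₂_pow]
  exact hN

/-- Carayol/finiteness of trace algebras: let `A` be a complete local Noetherian `O`-algebra
with residue field `k` (`O = W(k)`, a complete DVR), and `ρ : G → GL_n(A)` a representation
whose residual representation is absolutely irreducible.  If `ρ` has finite image, then the
`O`-subalgebra of `A` generated by the traces `tr ρ(g)` is a finite `O`-module. -/
theorem trace_algebra_finite
    (k : Type) [Field k] [Finite k]
    (O : Type) [CommRing O] [IsDomain O] [IsDiscreteValuationRing O]
    [IsAdicComplete (IsLocalRing.maximalIdeal O) O]
    (A : Type) [CommRing A] [IsLocalRing A] [IsNoetherianRing A]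
    [IsAdicComplete (IsLocalRing.maximalIdeal A) A]
    [Algebra O A]
    (π : A →+* k) (hπ : Function.Surjective π)
    (hkerπ : RingHom.ker π = IsLocalRing.maximalIdeal A)
    (n : ℕ) (G : Type) [Group G]
    (ρ : G →* GL (Fin n) A)
    -- the residual representation is absolutely irreducible:
    (habsirr : ∀ (K : Type) [Field K] (i : k →+* K)
      (W : Submodule K (Fin n → K)),
      (∀ g : G, W.map (Matrix.toLin' (((ρ g : Matrix (Fin n) (Fin n) A)).map (i.comp π))) ≤ W) →
      W = ⊥ ∨ W = ⊤)
    (hfin : (Set.range ρ).Finite) :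
    Module.Finite O
      (Algebra.adjoin O {a : A | ∃ g : G, a = Matrix.trace (ρ g : Matrix (Fin n) (Fin n) A)}) := by
  classical
  set s : Set A := {a : A | ∃ g : G, a = Matrix.trace (ρ g : Matrix (Fin n) (Fin n) A)} with hs
  have hsfin : s.Finite := by
    apply Set.Finite.subset
      (hfin.image (fun u : GL (Fin n) A => Matrix.trace (u : Matrix (Fin n) (Fin n) A)))
    rintro a ⟨g, rfl⟩
    exact ⟨ρ g, ⟨g, rfl⟩, rfl⟩
  haveI : Finite (Set.range ⇑ρ) := hfin.to_subtype
  haveI : Finite (MonoidHom.range ρ) := by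
    have h : (MonoidHom.range ρ : Set (GL (Fin n) A)) = Set.range ρ := by
      ext u; simp [MonoidHom.mem_range, eq_comm]
    exact Finite.of_equiv _ (Equiv.setCongr h.symm)
  have hint : ∀ x ∈ s, IsIntegral O x := by
    rintro x ⟨g, rfl⟩
    set u : MonoidHom.range ρ := ⟨ρ g, g, rfl⟩ with hu
    have hm : orderOf u ≠ 0 := (orderOf_pos u).ne'
    have hupow : (ρ g) ^ (orderOf u) = 1 := by
      have := pow_orderOf_eq_one u
      have h2 := congrArg (Subtype.val) this
      rw [SubmonoidClass.coe_pow, OneMemClass.coe_one] at h2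
      exact h2
    have hMpow : ((ρ g : Matrix (Fin n) (Fin n) A)) ^ (orderOf u) = 1 := by
      have := congrArg (Units.val) hupow
      simpa using this
    obtain ⟨q, hq, hq0⟩ := trace_int_poly_of_pow_eq_one hm _ hMpow
    refine ⟨q.map (Int.castRingHom O), hq.map _, ?_⟩
    rw [Polynomial.eval₂_map]
    have : (algebraMap O A).comp (Int.castRingHom O) = Int.castRingHom A :=
      RingHom.eq_intCast' _
    rw [this]
    exact hq0
  have hfg : (Algebra.adjoin O s).toSubmodule.FG := fg_adjoin_of_finite hsfin hint
  exact Module.Finite.iff_fg.2 hfg
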